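/- arXiv:2206.05088 — 2 statements merged into one kernel-verified Lean document; each statement's English description precedes it below -/
import Mathlib

section
/- Let f₂ : ℝ^{n₂} → ℝ, σ > 0, A₁ ∈ ℝ^{l×n₁}, A₂ ∈ ℝ^{l×n₂} with A₂ ≠ 0, b ∈ ℝ^l, γ ∈ (0, (1+√5)/2], and set σ' := σ/σ_max(A₂ᵀA₂). Let β⁻, β, β⁺ > 0 satisfy β⁻ ≤ β ≤ β⁺, β(β + σ') ≥ (β⁺)², and β³/(β + σ') ≤ (β⁻)². Let x₁^k, x₁^{k+1} ∈ ℝ^{n₁}, x₂^k, x₂^{k+1}, x₂' ∈ ℝ^{n₂}, λ^{k−1}, λ^k, λ ∈ ℝ^l; write e₀ := A₁x₁^k + A₂x₂^k − b and e := A₁x₁^{k+1} + A₂x₂^{k+1} − b. Assume: (i) for all x₂: f₂(x₂) − f₂(x₂^{k+1}) + (x₂ − x₂^{k+1})ᵀ[−A₂ᵀλ^k + β A₂ᵀ e] ≥ (σ/2)‖x₂^{k+1} − x₂‖²; (ii) for all x₂: f₂(x₂) − f₂(x₂^k) + (x₂ − x₂^k)ᵀ[−A₂ᵀλ^{k−1}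 + β⁻ A₂ᵀ e₀] ≥ (σ/2)‖x₂^k − x₂‖²; (iii) λ^k = λ^{k−1} − γβ⁻ e₀; and define λ^{k+1} := λ^k − γβ e and λ̃ := λ^k − β(A₁x₁^{k+1} + A₂x₂^k − b). Define H := blockdiag(β A₂ᵀA₂, (1/(γβ)) I_l), G := [ (1−γ)β A₂ᵀA₂, −(1−γ)A₂ᵀ ; −(1−γ)A₂, ((2−γ)/β) I_l ], H₀(s) := blockdiag(s² A₂ᵀA₂, (1/γ) I_l) for s > 0, Θ := (1−γ)²(β⁻)²‖e₀‖², Θ⁺ := (1−γ)² β² ‖e‖², and v^k := (x₂^k, λ^k), v^{k+1} := (x₂^{k+1}, λ^{k+1}), ṽ := (x₂^{k+1}, λ̃), v' := (x₂', λ). Then β( ‖v^{k+1} − v'‖²_H + σ‖x₂^{k+1} − x₂'‖² − ‖v^k − v'‖²_H + ‖v^k − ṽ‖²_G ) ≥ ‖v^{k+1} − v'‖²_{H₀(β⁺)} − ‖v^k − v'‖²_{H₀(β)} + Θ⁺ − Θ. -/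
open Matrix

/-- `qf D w = wᵀ D w`, the (possibly indefinite) quadratic form `‖w‖²_D`. -/
noncomputable def qf {m : Type*} [Fintype m] (D : Matrix m m ℝ) (w : m → ℝ) : ℝ :=
  w ⬝ᵥ D.mulVec w

/-- `maxEig B` is the largest eigenvalue of `B` (for a symmetric matrix, the
supremum of its eigenvalue set), denoted `σ_max(B)` in the paper. -/
noncomputable def maxEig {m : Type*} [Fintype m] (B : Matrix m m ℝ) : ℝ :=
  sSup {μ : ℝ | ∃ v : m → ℝ, v ≠ 0 ∧ B.mulVec v = μ • v}

/-!
Scaling by `β` turns `H` into `H₀(β)`, and the primal gain `(β⁺)² - β² ≤ βσ'` is paid for by the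
strong-convexity term, since `σ' ‖A₂ x‖² ≤ σ ‖x‖²` by the Rayleigh bound. In the `G`-block the
multiplier residual `λᵏ - λ̃` equals `β (e + w)` with `w = A₂ (x₂ᵏ - x₂ᵏ⁺¹)`, and adding the
optimality inequalities (i) and (ii) (monotonicity of `∂f₂`) gives `⟨w, β e + (γ - 1) β⁻ e₀⟩ ≥ 0`.
Then `β ‖vᵏ - ṽ‖²_G - Θ⁺ + Θ` is the sum of `(1 + γ - γ²) β² ‖e‖²`, the square
`‖β w + (1 - γ) β⁻ e₀‖²` and `2β` times that monotonicity term; the first is nonnegative exactly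
when `γ` lies between the two roots of `γ² = γ + 1`.
-/

theorem Real.sq_le_add_one_of_goldenConj_le_of_le_goldenRatio {γ : ℝ}
    (h₀ : goldenConj ≤ γ) (h₁ : γ ≤ goldenRatio) : γ ^ 2 ≤ γ + 1 := by
  have hfactor : γ ^ 2 - γ - 1 = (γ - goldenRatio) * (γ - goldenConj) := by
    linear_combination (-γ) * goldenRatio_add_goldenConj - goldenRatio_mul_goldenConj
  have := mul_nonpos_of_nonpos_of_nonneg (sub_nonpos.mpr h₁) (sub_nonneg.mpr h₀)
  linarith

section Spectrum

variable {n : Type*} [Fintype n]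

theorem Matrix.exists_mulVec_eq_smul_iff_mem_spectrum [DecidableEq n] {B : Matrix n n ℝ}
    {μ : ℝ} : (∃ v : n → ℝ, v ≠ 0 ∧ B *ᵥ v = μ • v) ↔ μ ∈ spectrum ℝ B := by
  rw [← spectrum_toLin', ← Module.End.hasEigenvalue_iff_mem_spectrum]
  constructor
  · rintro ⟨v, hv0, hv⟩
    exact Module.End.hasEigenvalue_of_hasEigenvector
      ⟨Module.End.mem_eigenspace_iff.mpr (by simpa using hv), hv0⟩
  · intro h
    obtain ⟨v, hv, hv0⟩ := h.exists_hasEigenvector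
    exact ⟨v, hv0, by simpa using Module.End.mem_eigenspace_iff.mp hv⟩

theorem le_maxEig [DecidableEq n] {B : Matrix n n ℝ} {μ : ℝ} (h : μ ∈ spectrum ℝ B) :
    μ ≤ maxEig B := by
  have hset : {μ : ℝ | ∃ v : n → ℝ, v ≠ 0 ∧ B *ᵥ v = μ • v} = spectrum ℝ B :=
    Set.ext fun _ ↦ exists_mulVec_eq_smul_iff_mem_spectrum
  rw [maxEig, hset]
  exact le_csSup finite_real_spectrum.bddAbove h

theorem Matrix.IsHermitian.dotProduct_mulVec_le_maxEig_mul {B : Matrix n n ℝ}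
    (hB : B.IsHermitian) (v : n → ℝ) : v ⬝ᵥ B *ᵥ v ≤ maxEig B * (v ⬝ᵥ v) := by
  classical
  have hpsd : (maxEig B • 1 - B).PosSemidef := by
    rw [posSemidef_iff_isHermitian_and_spectrum_nonneg]
    refine ⟨(isHermitian_one.smul (IsSelfAdjoint.all _)).sub hB, ?_⟩
    rw [← Algebra.algebraMap_eq_smul_one, ← spectrum.singleton_sub_eq]
    rintro _ ⟨_, rfl, μ, hμ, rfl⟩
    exact sub_nonneg.mpr (le_maxEig hμ)
  simpa [sub_mulVec, smul_mulVec, dotProduct_sub] using hpsd.dotProduct_mulVec_nonneg v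

/-- `σ / maxEig (Aᵀ * A)` is the paper's `σ'`. If `maxEig (Aᵀ * A) ≤ 0` (where `σ / 0 = 0`), the
left-hand side is nonpositive. -/
theorem div_maxEig_mul_dotProduct_mulVec_le {m : Type*} [Fintype m] {σ : ℝ} (hσ : 0 ≤ σ)
    (A : Matrix m n ℝ) (x : n → ℝ) :
    σ / maxEig (Aᵀ * A) * (A *ᵥ x ⬝ᵥ A *ᵥ x) ≤ σ * (x ⬝ᵥ x) := by
  have hgram : (Aᵀ * A).IsHermitian := by
    simpa using isHermitian_conjTranspose_mul_self A
  have hrayleigh := hgram.dotProduct_mulVec_le_maxEig_mul x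
  rw [← mulVec_mulVec, dotProduct_transpose_mulVec] at hrayleigh
  rcases lt_or_ge 0 (maxEig (Aᵀ * A)) with hpos | hnonpos
  · calc σ / maxEig (Aᵀ * A) * (A *ᵥ x ⬝ᵥ A *ᵥ x)
        ≤ σ / maxEig (Aᵀ * A) * (maxEig (Aᵀ * A) * (x ⬝ᵥ x)) := by gcongr
      _ = σ * (x ⬝ᵥ x) := by field_simp
  · calc σ / maxEig (Aᵀ * A) * (A *ᵥ x ⬝ᵥ A *ᵥ x)
        ≤ 0 := mul_nonpos_of_nonpos_of_nonneg (div_nonpos_of_nonneg_of_nonpos hσ hnonpos)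
          (dotProduct_self_star_nonneg _)
      _ ≤ σ * (x ⬝ᵥ x) := mul_nonneg hσ (dotProduct_self_star_nonneg _)

end Spectrum

section QuadraticForm

variable {m n : Type*} [Fintype m] [Fintype n]

theorem qf_smul (c : ℝ) (D : Matrix m m ℝ) (w : m → ℝ) : qf (c • D) w = c * qf D w := by
  rw [qf, qf, smul_mulVec, dotProduct_smul, smul_eq_mul]

theorem qf_fromBlocks (P : Matrix m m ℝ) (Q : Matrix m n ℝ) (R : Matrix n m ℝ)
    (S : Matrix n n ℝ) (x : m → ℝ) (y : n → ℝ) :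
    qf (fromBlocks P Q R S) (Sum.elim x y) = qf P x + x ⬝ᵥ Q *ᵥ y + y ⬝ᵥ R *ᵥ x + qf S y := by
  simp only [qf, fromBlocks_mulVec, sumElim_dotProduct_sumElim, Sum.elim_comp_inl,
    Sum.elim_comp_inr, dotProduct_add]
  ring

theorem qf_fromBlocks_gram [DecidableEq n] (a c d : ℝ) (A : Matrix n m ℝ) (x : m → ℝ)
    (y : n → ℝ) :
    qf (fromBlocks (a • (Aᵀ * A)) (-(c • Aᵀ)) (-(c • A)) (d • 1)) (Sum.elim x y) =
      a * (A *ᵥ x ⬝ᵥ A *ᵥ x) - 2 * c * (A *ᵥ x ⬝ᵥ y) + d * (y ⬝ᵥ y) := by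
  rw [qf_fromBlocks]
  simp only [qf, smul_mulVec, neg_mulVec, ← mulVec_mulVec, one_mulVec, dotProduct_smul,
    dotProduct_neg, dotProduct_transpose_mulVec, smul_eq_mul]
  rw [dotProduct_comm y]
  ring

theorem qf_fromBlocks_gram_diag [DecidableEq n] (a d : ℝ) (A : Matrix n m ℝ) (x : m → ℝ)
    (y : n → ℝ) :
    qf (fromBlocks (a • (Aᵀ * A)) 0 0 (d • 1)) (Sum.elim x y) =
      a * (A *ᵥ x ⬝ᵥ A *ᵥ x) + d * (y ⬝ᵥ y) := by
  simpa using qf_fromBlocks_gram a 0 d A x y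

end QuadraticForm

theorem dotProduct_sub_ge_of_optimality {n : Type*} [Fintype n] (f : (n → ℝ) → ℝ) {σ : ℝ}
    {x y u v : n → ℝ}
    (hx : ∀ z, f z - f x + (z - x) ⬝ᵥ u ≥ σ / 2 * ((x - z) ⬝ᵥ (x - z)))
    (hy : ∀ z, f z - f y + (z - y) ⬝ᵥ v ≥ σ / 2 * ((y - z) ⬝ᵥ (y - z))) :
    (x - y) ⬝ᵥ (v - u) ≥ σ * ((x - y) ⬝ᵥ (x - y)) := by
  have hxy := hx y
  have hyx := hy x
  rw [← neg_sub x y, neg_dotProduct_neg] at hyx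
  rw [← neg_sub x y, neg_dotProduct] at hxy
  rw [dotProduct_sub]
  linarith

/-- Monotonicity of `∂f` along two consecutive ADMM `x₂`-steps: `x` was computed with multiplier
`y₀`, penalty `βm` and residual `e₀`, then `x'` with `y`, `β` and `e`. -/
theorem mulVec_sub_dotProduct_residuals_nonneg {m l : Type*} [Fintype m] [Fintype l]
    (f : (m → ℝ) → ℝ) {σ β βm γ : ℝ} (hσ : 0 ≤ σ) (A : Matrix l m ℝ) {x x' : m → ℝ}
    {y₀ y e₀ e : l → ℝ}
    (hx' : ∀ z, f z - f x' + (z - x') ⬝ᵥ (-(Aᵀ *ᵥ y) + β • Aᵀ *ᵥ e)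
      ≥ σ / 2 * ((x' - z) ⬝ᵥ (x' - z)))
    (hx : ∀ z, f z - f x + (z - x) ⬝ᵥ (-(Aᵀ *ᵥ y₀) + βm • Aᵀ *ᵥ e₀)
      ≥ σ / 2 * ((x - z) ⬝ᵥ (x - z)))
    (hy : y = y₀ - (γ * βm) • e₀) :
    0 ≤ A *ᵥ (x - x') ⬝ᵥ (β • e + ((γ - 1) * βm) • e₀) := by
  have hgrad : -(Aᵀ *ᵥ y₀) + βm • Aᵀ *ᵥ e₀ - (-(Aᵀ *ᵥ y) + β • Aᵀ *ᵥ e) =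
      -(Aᵀ *ᵥ (β • e + ((γ - 1) * βm) • e₀)) := by
    rw [hy]
    simp only [mulVec_sub, mulVec_add, mulVec_smul]
    module
  have h := dotProduct_sub_ge_of_optimality f hx' hx
  rw [hgrad, dotProduct_neg, dotProduct_transpose_mulVec, dotProduct_comm, ← neg_dotProduct,
    ← mulVec_neg, neg_sub] at h
  exact le_trans (mul_nonneg hσ (dotProduct_self_star_nonneg _)) h

theorem admm_dual_residual_bound {l : Type*} [Fintype l] {β βm γ : ℝ} (hβ : 0 < β)
    (hγ : γ ^ 2 ≤ γ + 1) {w e e₀ : l → ℝ}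
    (hmono : 0 ≤ w ⬝ᵥ (β • e + ((γ - 1) * βm) • e₀)) :
    (1 - γ) ^ 2 * β ^ 2 * (e ⬝ᵥ e) - (1 - γ) ^ 2 * βm ^ 2 * (e₀ ⬝ᵥ e₀) ≤
      β * ((1 - γ) * β * (w ⬝ᵥ w) - 2 * (1 - γ) * (w ⬝ᵥ β • (e + w))
        + (2 - γ) / β * (β • (e + w) ⬝ᵥ β • (e + w))) := by
  have hsq := dotProduct_self_star_nonneg (β • w + ((1 - γ) * βm) • e₀)
  have he := dotProduct_self_star_nonneg e
  simp only [star_trivial, dotProduct_add, add_dotProduct, dotProduct_smul, smul_dotProduct,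
    smul_eq_mul, dotProduct_comm e₀ w, dotProduct_comm e w] at hsq hmono he ⊢
  have hβ0 : β ≠ 0 := hβ.ne'
  field_simp
  linarith [mul_nonneg (mul_nonneg (sq_nonneg β) (sub_nonneg.mpr hγ)) he,
    mul_nonneg hβ.le hmono]

theorem stmt13_general {n₁ n₂ l : ℕ}
    (f₂ : (Fin n₂ → ℝ) → ℝ) (σ : ℝ) (hσ : 0 < σ)
    (A₁ : Matrix (Fin l) (Fin n₁) ℝ) (A₂ : Matrix (Fin l) (Fin n₂) ℝ)
    (b : Fin l → ℝ)
    (γ : ℝ) (hγ : γ ∈ Set.Ioc (0 : ℝ) ((1 + Real.sqrt 5) / 2))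
    (σ' : ℝ) (hσ' : σ' = σ / maxEig (A₂ᵀ * A₂))
    (βm β βp : ℝ) (hβ : 0 < β)
    (hgrow : β * (β + σ') ≥ βp ^ 2)
    (x1kk : Fin n₁ → ℝ) (x2k x2kk x2' : Fin n₂ → ℝ)
    (lamkm lamk lam : Fin l → ℝ)
    (e₀ e : Fin l → ℝ)
    (he : e = A₁.mulVec x1kk + A₂.mulVec x2kk - b)
    (hi : ∀ x₂ : Fin n₂ → ℝ,
      f₂ x₂ - f₂ x2kk + (x₂ - x2kk) ⬝ᵥ (-(A₂ᵀ.mulVec lamk) + β • A₂ᵀ.mulVec e)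
        ≥ σ / 2 * ((x2kk - x₂) ⬝ᵥ (x2kk - x₂)))
    (hii : ∀ x₂ : Fin n₂ → ℝ,
      f₂ x₂ - f₂ x2k + (x₂ - x2k) ⬝ᵥ (-(A₂ᵀ.mulVec lamkm) + βm • A₂ᵀ.mulVec e₀)
        ≥ σ / 2 * ((x2k - x₂) ⬝ᵥ (x2k - x₂)))
    (hiii : lamk = lamkm - (γ * βm) • e₀)
    (lamkk lamt : Fin l → ℝ)
    (hlamt : lamt = lamk - β • (A₁.mulVec x1kk + A₂.mulVec x2k - b))
    (H : Matrix (Fin n₂ ⊕ Fin l) (Fin n₂ ⊕ Fin l) ℝ)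
    (hH : H = Matrix.fromBlocks (β • (A₂ᵀ * A₂)) 0 0 ((1 / (γ * β)) • 1))
    (G : Matrix (Fin n₂ ⊕ Fin l) (Fin n₂ ⊕ Fin l) ℝ)
    (hG : G = Matrix.fromBlocks (((1 - γ) * β) • (A₂ᵀ * A₂)) (-((1 - γ) • A₂ᵀ))
        (-((1 - γ) • A₂)) (((2 - γ) / β) • 1))
    (H₀ : ℝ → Matrix (Fin n₂ ⊕ Fin l) (Fin n₂ ⊕ Fin l) ℝ)
    (hH₀ : ∀ s, H₀ s = Matrix.fromBlocks (s ^ 2 • (A₂ᵀ * A₂)) 0 0 ((1 / γ) • 1))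
    (Θ Θp : ℝ)
    (hΘ : Θ = (1 - γ) ^ 2 * βm ^ 2 * (e₀ ⬝ᵥ e₀))
    (hΘp : Θp = (1 - γ) ^ 2 * β ^ 2 * (e ⬝ᵥ e)) :
    β * (qf H (Sum.elim x2kk lamkk - Sum.elim x2' lam)
        + σ * ((x2kk - x2') ⬝ᵥ (x2kk - x2'))
        - qf H (Sum.elim x2k lamk - Sum.elim x2' lam)
        + qf G (Sum.elim x2k lamk - Sum.elim x2kk lamt))
      ≥ qf (H₀ βp) (Sum.elim x2kk lamkk - Sum.elim x2' lam)
        - qf (H₀ β) (Sum.elim x2k lamk - Sum.elim x2' lam)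
        + Θp - Θ := by
  obtain ⟨hγ0, hγφ⟩ := hγ
  set w := A₂ *ᵥ (x2k - x2kk) with hw
  have hres : lamk - lamt = β • (e + w) := by
    rw [hlamt, sub_sub_cancel, he, hw, mulVec_sub]
    congr 1
    abel
  have hdual : Θp - Θ ≤ β * qf G (Sum.elim x2k lamk - Sum.elim x2kk lamt) := by
    rw [hG, hΘ, hΘp, ← Sum.elim_sub_sub, qf_fromBlocks_gram, hres, ← hw]
    exact admm_dual_residual_bound hβ
      (Real.sq_le_add_one_of_goldenConj_le_of_le_goldenRatio
        (Real.goldenConj_neg.le.trans hγ0.le) hγφ)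
      (mulVec_sub_dotProduct_residuals_nonneg f₂ hσ.le A₂ hi hii hiii)
  have hscale : ∀ v, β * qf H v = qf (H₀ β) v := by
    intro v
    have hβγ : β * (1 / (γ * β)) = 1 / γ := by field_simp
    rw [← qf_smul, hH, hH₀, fromBlocks_smul, smul_smul, smul_smul, ← sq, hβγ]
    simp only [smul_zero]
  have hprimal : qf (H₀ βp) (Sum.elim x2kk lamkk - Sum.elim x2' lam) ≤
      qf (H₀ β) (Sum.elim x2kk lamkk - Sum.elim x2' lam)
        + β * (σ * ((x2kk - x2') ⬝ᵥ (x2kk - x2'))) := by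
    have hσ'A := div_maxEig_mul_dotProduct_mulVec_le hσ.le A₂ (x2kk - x2')
    rw [← hσ'] at hσ'A
    have hU : 0 ≤ A₂ *ᵥ (x2kk - x2') ⬝ᵥ A₂ *ᵥ (x2kk - x2') := dotProduct_self_star_nonneg _
    rw [hH₀, hH₀, ← Sum.elim_sub_sub, qf_fromBlocks_gram_diag, qf_fromBlocks_gram_diag]
    linarith [mul_le_mul_of_nonneg_right hgrow hU, mul_le_mul_of_nonneg_left hσ'A hβ.le]
  rw [mul_add, mul_sub, mul_add, hscale, hscale]
  linarith

/-- Theorem 3.3: ADMM for the two-block problem (P2) with `f₂` `σ`-strongly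
convex and dual step length `γβ`, `γ ∈ (0, (1+√5)/2]`, satisfies the additional
convergence condition (CC3) with `rᵏ = β`, `Θ = (1-γ)²(β⁻)²‖e₀‖²`,
`Θ⁺ = (1-γ)²β²‖e‖²` and `H₀(s) = blockdiag(s²A₂ᵀA₂, (1/γ)I)`. -/
theorem stmt13 {n₁ n₂ l : ℕ}
    (f₂ : (Fin n₂ → ℝ) → ℝ) (σ : ℝ) (hσ : 0 < σ)
    (A₁ : Matrix (Fin l) (Fin n₁) ℝ) (A₂ : Matrix (Fin l) (Fin n₂) ℝ)
    (hA₂ : A₂ ≠ 0) (b : Fin l → ℝ)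
    (γ : ℝ) (hγ : γ ∈ Set.Ioc (0 : ℝ) ((1 + Real.sqrt 5) / 2))
    (σ' : ℝ) (hσ' : σ' = σ / maxEig (A₂ᵀ * A₂))
    (βm β βp : ℝ) (hβm : 0 < βm) (hβ : 0 < β) (hβp : 0 < βp)
    (hle1 : βm ≤ β) (hle2 : β ≤ βp)
    (hgrow : β * (β + σ') ≥ βp ^ 2)
    (hdecay : β ^ 3 / (β + σ') ≤ βm ^ 2)
    (x1k x1kk : Fin n₁ → ℝ) (x2k x2kk x2' : Fin n₂ → ℝ)
    (lamkm lamk lam : Fin l → ℝ)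
    (e₀ e : Fin l → ℝ)
    (he₀ : e₀ = A₁.mulVec x1k + A₂.mulVec x2k - b)
    (he : e = A₁.mulVec x1kk + A₂.mulVec x2kk - b)
    (hi : ∀ x₂ : Fin n₂ → ℝ,
      f₂ x₂ - f₂ x2kk + (x₂ - x2kk) ⬝ᵥ (-(A₂ᵀ.mulVec lamk) + β • A₂ᵀ.mulVec e)
        ≥ σ / 2 * ((x2kk - x₂) ⬝ᵥ (x2kk - x₂)))
    (hii : ∀ x₂ : Fin n₂ → ℝ,
      f₂ x₂ - f₂ x2k + (x₂ - x2k) ⬝ᵥ (-(A₂ᵀ.mulVec lamkm) + βm • A₂ᵀ.mulVec e₀)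
        ≥ σ / 2 * ((x2k - x₂) ⬝ᵥ (x2k - x₂)))
    (hiii : lamk = lamkm - (γ * βm) • e₀)
    (lamkk lamt : Fin l → ℝ)
    (hlamkk : lamkk = lamk - (γ * β) • e)
    (hlamt : lamt = lamk - β • (A₁.mulVec x1kk + A₂.mulVec x2k - b))
    (H : Matrix (Fin n₂ ⊕ Fin l) (Fin n₂ ⊕ Fin l) ℝ)
    (hH : H = Matrix.fromBlocks (β • (A₂ᵀ * A₂)) 0 0 ((1 / (γ * β)) • 1))
    (G : Matrix (Fin n₂ ⊕ Fin l) (Fin n₂ ⊕ Fin l) ℝ)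
    (hG : G = Matrix.fromBlocks (((1 - γ) * β) • (A₂ᵀ * A₂)) (-((1 - γ) • A₂ᵀ))
        (-((1 - γ) • A₂)) (((2 - γ) / β) • 1))
    (H₀ : ℝ → Matrix (Fin n₂ ⊕ Fin l) (Fin n₂ ⊕ Fin l) ℝ)
    (hH₀ : ∀ s, H₀ s = Matrix.fromBlocks (s ^ 2 • (A₂ᵀ * A₂)) 0 0 ((1 / γ) • 1))
    (Θ Θp : ℝ)
    (hΘ : Θ = (1 - γ) ^ 2 * βm ^ 2 * (e₀ ⬝ᵥ e₀))
    (hΘp : Θp = (1 - γ) ^ 2 * β ^ 2 * (e ⬝ᵥ e)) :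
    β * (qf H (Sum.elim x2kk lamkk - Sum.elim x2' lam)
        + σ * ((x2kk - x2') ⬝ᵥ (x2kk - x2'))
        - qf H (Sum.elim x2k lamk - Sum.elim x2' lam)
        + qf G (Sum.elim x2k lamk - Sum.elim x2kk lamt))
      ≥ qf (H₀ βp) (Sum.elim x2kk lamkk - Sum.elim x2' lam)
        - qf (H₀ β) (Sum.elim x2k lamk - Sum.elim x2' lam)
        + Θp - Θ :=
  stmt13_general f₂ σ hσ A₁ A₂ b γ hγ σ' hσ' βm β βp hβ hgrow x1kk x2k x2kk x2' lamkm lamk lam e₀ e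
    he hi hii hiii lamkk lamt hlamt H hH G hG H₀ hH₀ Θ Θp hΘ hΘp
end

section
/- Let f₂ : ℝ^{n₂} → ℝ, σ > 0, A₁ ∈ ℝ^{l×n₁}, A₂ ∈ ℝ^{l×n₂}, b ∈ ℝ^l, τ ∈ [3/4, 1], and r > σ_max(A₂ᵀA₂). Let β⁻, β, β⁺ > 0 satisfy β⁻ ≤ β ≤ β⁺ and β(τ r β + σ) ≥ τ r (β⁺)². Define D := τ r β I_{n₂} − β A₂ᵀA₂ and D⁻ := τ r β⁻ I_{n₂} − β⁻ A₂ᵀA₂. Let x₁^{k+1} ∈ ℝ^{n₁}, x₂^{k−1}, x₂^k, x₂^{k+1}, x₂' ∈ ℝ^{n₂}, λ^k, λ ∈ ℝ^l, and set λ^{k+1} := λ^k − β(A₁x₁^{k+1} + A₂x₂^{k+1} − b) and λ̃ := λ^k − β(A₁x₁^{k+1} + A₂x₂^k − b). Assume: (i) for all x₂: f₂(x₂) − f₂(x₂^{k+1}) + (x₂ − x₂^{k+1})ᵀ[−A₂ᵀλ^{k+1} + D(x₂^{k+1} − x₂^k)] ≥ (σ/2)‖x₂^{k+1} − x₂‖²;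 (ii) for all x₂: f₂(x₂) − f₂(x₂^k) + (x₂ − x₂^k)ᵀ[−A₂ᵀλ^k + D⁻(x₂^k − x₂^{k−1})] ≥ (σ/2)‖x₂^k − x₂‖². Define H := blockdiag(τ r β I_{n₂}, (1/β) I_l), G := blockdiag(D, (1/β) I_l), H₀(s) := blockdiag(τ r s² I_{n₂}, I_l) for s > 0, Θ(s, w) := (1/2) s² ‖w‖²_{τ r I_{n₂} + (1 − 2τ) A₂ᵀA₂}, and v^k := (x₂^k, λ^k), v^{k+1} := (x₂^{k+1}, λ^{k+1}), ṽ := (x₂^{k+1}, λ̃), v' := (x₂', λ). Then β( ‖v^{k+1} − v'‖²_H + σ‖x₂^{k+1} − x₂'‖² − ‖v^k − v'‖²_H + ‖v^k − ṽ‖²_G ) ≥ ‖v^{k+1} − v'‖²_{H₀(β⁺)} − ‖v^k − v'‖²_{H₀(β)} + Θ(β⁺, x₂^k − x₂^{k+1}) − Θ(β, x₂^{k−1} − x₂^k). -/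
/-! Testing each of the two optimality inequalities at the other iterate and adding them gives
strong monotonicity: with `d = x₂ᵏ - x₂ᵏ⁺¹`, `d⁻ = x₂ᵏ⁻¹ - x₂ᵏ`, `p = λᵏ - λ̃` and
`λᵏ - λᵏ⁺¹ = p - βA₂d`,
`σ‖d‖² ≤ ⟨A₂d, p⟩ - τrβ‖d‖² + β⁻(τr⟨d, d⁻⟩ - ⟨A₂d, A₂d⁻⟩)`.
After multiplying by `β`, the multiplier terms and the terms in `x₂ᵏ - x₂'` cancel, up to
`(τrβ² + βσ - τr(β⁺)²)‖x₂ᵏ⁺¹ - x₂'‖² ≥ 0`, so what remains is to bound the difference of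
the `Θ` terms by `β‖d‖²_D + ‖p‖²`. Completing the square gives
`‖p‖² ≥ β⟨A₂d, p⟩ - β²‖A₂d‖²/4`, the monotonicity bound eliminates `p`, and the remaining
cross term in `d, d⁻` is dominated using `A₂ᵀA₂ ≤ rI` on `d ± d⁻` and on `d`; the leftover
multiple `(3τ - 9/4)‖A₂d‖²` is where `τ ≥ 3/4` enters. -/

open Matrix

namespace Matrix

variable {m n : Type*} [Fintype m] [Fintype n]

theorem le_maxEig {B : Matrix m m ℝ} {μ : ℝ} {v : m → ℝ} (hv : v ≠ 0) (h : B *ᵥ v = μ • v) :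
    μ ≤ maxEig B := by
  classical
  refine le_csSup ((B.finite_spectrum.subset ?_).bddAbove) ⟨v, hv, h⟩
  rintro μ ⟨v, hv, h⟩
  rw [← spectrum_toLin']
  exact (Module.End.hasEigenvalue_of_hasEigenvector
    ⟨Module.End.mem_eigenspace_iff.mpr (by simpa using h), hv⟩).mem_spectrum

theorem IsHermitian.posSemidef_smul_one_sub_of_maxEig_lt [DecidableEq m] {B : Matrix m m ℝ}
    (hB : B.IsHermitian) {r : ℝ} (hr : maxEig B < r) : (r • 1 - B).PosSemidef := by
  have hM : (r • 1 - B).IsHermitian := (isHermitian_one.smul (IsSelfAdjoint.all r)).sub hB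
  rw [hM.posSemidef_iff_eigenvalues_nonneg]
  intro i
  set v : m → ℝ := ⇑(hM.eigenvectorBasis i)
  have hv : v ≠ 0 := fun h => by
    have h0 : hM.eigenvectorBasis i = 0 := by ext j; exact congrFun h j
    simpa [h0] using hM.eigenvectorBasis.orthonormal.1 i
  have hBv : B *ᵥ v = (r - hM.eigenvalues i) • v := by
    have := hM.mulVec_eigenvectorBasis i
    rw [sub_mulVec, smul_mulVec, one_mulVec] at this
    rw [sub_smul, ← this]
    abel
  have := le_maxEig hv hBv
  simp only [Pi.zero_apply]
  linarith

theorem IsHermitian.dotProduct_mulVec_le_of_maxEig_lt {B : Matrix m m ℝ} (hB : B.IsHermitian)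
    {r : ℝ} (hr : maxEig B < r) (x : m → ℝ) : x ⬝ᵥ (B *ᵥ x) ≤ r * (x ⬝ᵥ x) := by
  classical
  have := (hB.posSemidef_smul_one_sub_of_maxEig_lt hr).dotProduct_mulVec_nonneg x
  rw [star_trivial, sub_mulVec, smul_mulVec, one_mulVec, dotProduct_sub, dotProduct_smul,
    smul_eq_mul] at this
  linarith

theorem dotProduct_mulVec_transpose_mul_self (A : Matrix m n ℝ) (x y : n → ℝ) :
    x ⬝ᵥ ((Aᵀ * A) *ᵥ y) = (A *ᵥ x) ⬝ᵥ (A *ᵥ y) := by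
  rw [← mulVec_mulVec, dotProduct_mulVec, vecMul_transpose]

theorem mulVec_dotProduct_self_le_of_maxEig_lt (A : Matrix m n ℝ) {r : ℝ}
    (hr : maxEig (Aᵀ * A) < r) (x : n → ℝ) : (A *ᵥ x) ⬝ᵥ (A *ᵥ x) ≤ r * (x ⬝ᵥ x) := by
  rw [← dotProduct_mulVec_transpose_mul_self]
  exact (by simpa using isHermitian_conjTranspose_mul_self A :
    (Aᵀ * A).IsHermitian).dotProduct_mulVec_le_of_maxEig_lt hr x

end Matrix

section Quadratic

variable {n l : Type*} [Fintype n] [Fintype l]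

theorem qf_fromBlocks_zero_sumElim (B : Matrix n n ℝ) (C : Matrix l l ℝ) (x : n → ℝ)
    (y : l → ℝ) : qf (fromBlocks B 0 0 C) (Sum.elim x y) = qf B x + qf C y := by
  simp [qf, fromBlocks_mulVec]

theorem qf_one [DecidableEq n] (x : n → ℝ) : qf 1 x = x ⬝ᵥ x := by
  rw [qf, one_mulVec]

theorem qf_smul_one [DecidableEq n] (c : ℝ) (x : n → ℝ) : qf (c • 1) x = c * (x ⬝ᵥ x) := by
  rw [qf, smul_mulVec, one_mulVec, dotProduct_smul, smul_eq_mul]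

theorem dotProduct_smul_one_sub_smul_mulVec [DecidableEq n] (A : Matrix l n ℝ) (c e : ℝ)
    (x y : n → ℝ) :
    x ⬝ᵥ ((c • 1 - e • (Aᵀ * A)) *ᵥ y) = c * (x ⬝ᵥ y) - e * ((A *ᵥ x) ⬝ᵥ (A *ᵥ y)) := by
  rw [sub_mulVec, dotProduct_sub, smul_mulVec, smul_mulVec, one_mulVec, dotProduct_smul,
    dotProduct_smul, smul_eq_mul, smul_eq_mul, dotProduct_mulVec_transpose_mul_self]

theorem qf_smul_one_sub_smul [DecidableEq n] (A : Matrix l n ℝ) (c e : ℝ) (x : n → ℝ) :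
    qf (c • 1 - e • (Aᵀ * A)) x = c * (x ⬝ᵥ x) - e * ((A *ᵥ x) ⬝ᵥ (A *ᵥ x)) :=
  dotProduct_smul_one_sub_smul_mulVec A c e x x

theorem qf_smul_one_add_smul [DecidableEq n] (A : Matrix l n ℝ) (c e : ℝ) (x : n → ℝ) :
    qf (c • 1 + e • (Aᵀ * A)) x = c * (x ⬝ᵥ x) + e * ((A *ᵥ x) ⬝ᵥ (A *ᵥ x)) := by
  rw [qf, add_mulVec, dotProduct_add, smul_mulVec, smul_mulVec, one_mulVec, dotProduct_smul,
    dotProduct_smul, smul_eq_mul, smul_eq_mul, dotProduct_mulVec_transpose_mul_self]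

end Quadratic

theorem dotProduct_self_nonneg {n : Type*} [Fintype n] (x : n → ℝ) : 0 ≤ x ⬝ᵥ x := by
  simpa using dotProduct_star_self_nonneg x

theorem strongly_monotone_of_first_order_ineq {n : Type*} [Fintype n] {f : (n → ℝ) → ℝ} {σ : ℝ}
    {a b ga gb : n → ℝ}
    (ha : ∀ x, f x - f a + (x - a) ⬝ᵥ ga ≥ σ / 2 * ((a - x) ⬝ᵥ (a - x)))
    (hb : ∀ x, f x - f b + (x - b) ⬝ᵥ gb ≥ σ / 2 * ((b - x) ⬝ᵥ (b - x))) :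
    σ * ((b - a) ⬝ᵥ (b - a)) ≤ (b - a) ⬝ᵥ (ga - gb) := by
  have hab := ha b
  have hba := hb a
  rw [← neg_sub b a, neg_dotProduct_neg] at hab
  rw [← neg_sub b a, neg_dotProduct] at hba
  rw [dotProduct_sub (b - a) ga gb]
  linarith

section LinearizedStep

variable {n l : Type*} [Fintype n] [Fintype l] (A : Matrix l n ℝ)

theorem linearized_gradient_gap_eq [DecidableEq n] (ρ β βm : ℝ) (xm x xp : n → ℝ)
    {y yp p : l → ℝ} (hy : y - yp = p - β • (A *ᵥ (x - xp))) :
    (x - xp) ⬝ᵥ ((-(Aᵀ *ᵥ yp) + ((ρ * β) • 1 - β • (Aᵀ * A)) *ᵥ (xp - x))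
        - (-(Aᵀ *ᵥ y) + ((ρ * βm) • 1 - βm • (Aᵀ * A)) *ᵥ (x - xm)))
      = (A *ᵥ (x - xp)) ⬝ᵥ p - ρ * β * ((x - xp) ⬝ᵥ (x - xp))
        + βm * (ρ * ((x - xp) ⬝ᵥ (xm - x)) - (A *ᵥ (x - xp)) ⬝ᵥ (A *ᵥ (xm - x))) := by
  have hsplit : (-(Aᵀ *ᵥ yp) + ((ρ * β) • 1 - β • (Aᵀ * A)) *ᵥ (xp - x))
        - (-(Aᵀ *ᵥ y) + ((ρ * βm) • 1 - βm • (Aᵀ * A)) *ᵥ (x - xm))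
      = Aᵀ *ᵥ (y - yp) - ((ρ * β) • 1 - β • (Aᵀ * A)) *ᵥ (x - xp)
        + ((ρ * βm) • 1 - βm • (Aᵀ * A)) *ᵥ (xm - x) := by
    rw [← neg_sub x xp, ← neg_sub xm x, mulVec_sub, mulVec_neg, mulVec_neg]
    abel
  rw [hsplit, dotProduct_add, dotProduct_sub, dotProduct_transpose_mulVec, dotProduct_comm,
    dotProduct_smul_one_sub_smul_mulVec, dotProduct_smul_one_sub_smul_mulVec, hy,
    dotProduct_sub, dotProduct_smul, smul_eq_mul]
  ring

variable {A} {r τ : ℝ} (hA : ∀ w, (A *ᵥ w) ⬝ᵥ (A *ᵥ w) ≤ r * (w ⬝ᵥ w))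
  (hτ : τ ∈ Set.Icc (3 / 4 : ℝ) 1)
include hA hτ

theorem cross_term_le (d dm : n → ℝ) :
    τ * r * (d ⬝ᵥ dm) - (A *ᵥ d) ⬝ᵥ (A *ᵥ dm)
      ≤ 3 / 2 * τ * r * (d ⬝ᵥ d) + (τ - 7 / 4) * ((A *ᵥ d) ⬝ᵥ (A *ᵥ d))
        + 1 / 2 * τ * r * (dm ⬝ᵥ dm) + 1 / 2 * (1 - 2 * τ) * ((A *ᵥ dm) ⬝ᵥ (A *ᵥ dm)) := by
  obtain ⟨hτ1, hτ2⟩ := hτ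
  have hdiff := hA (d - dm)
  have hd := hA d
  have hsum := dotProduct_self_nonneg (A *ᵥ d + A *ᵥ dm)
  have hAd := dotProduct_self_nonneg (A *ᵥ d)
  simp only [mulVec_sub, dotProduct_sub, sub_dotProduct, dotProduct_add, add_dotProduct,
    dotProduct_comm dm d, dotProduct_comm (A *ᵥ dm) (A *ᵥ d)] at hdiff hsum
  linarith [mul_nonneg (by linarith : (0 : ℝ) ≤ τ / 2) (sub_nonneg.mpr hdiff),
    mul_nonneg (by linarith : (0 : ℝ) ≤ τ) (sub_nonneg.mpr hd),
    mul_nonneg (by linarith : (0 : ℝ) ≤ (1 - τ) / 2) hsum,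
    mul_nonneg (by linarith : (0 : ℝ) ≤ 3 * τ - 9 / 4) hAd]

theorem abs_cross_term_le (d dm : n → ℝ) :
    |τ * r * (d ⬝ᵥ dm) - (A *ᵥ d) ⬝ᵥ (A *ᵥ dm)|
      ≤ 3 / 2 * τ * r * (d ⬝ᵥ d) + (τ - 7 / 4) * ((A *ᵥ d) ⬝ᵥ (A *ᵥ d))
        + 1 / 2 * τ * r * (dm ⬝ᵥ dm) + 1 / 2 * (1 - 2 * τ) * ((A *ᵥ dm) ⬝ᵥ (A *ᵥ dm)) := by
  have h := cross_term_le hA hτ d (-dm)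
  simp only [dotProduct_neg, neg_dotProduct, mulVec_neg, neg_neg] at h
  exact abs_le.mpr ⟨by linarith, cross_term_le hA hτ d dm⟩

theorem linearized_step_estimate {σ β βm βp : ℝ} (hσ : 0 ≤ σ) (hβm : 0 < βm) (hle1 : βm ≤ β)
    (hle2 : β ≤ βp) (hgrow : β * (τ * r * β + σ) ≥ τ * r * βp ^ 2) (d dm : n → ℝ) (p : l → ℝ)
    (hmono : σ * (d ⬝ᵥ d) ≤ (A *ᵥ d) ⬝ᵥ p - τ * r * β * (d ⬝ᵥ d)
      + βm * (τ * r * (d ⬝ᵥ dm) - (A *ᵥ d) ⬝ᵥ (A *ᵥ dm))) :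
    1 / 2 * βp ^ 2 * (τ * r * (d ⬝ᵥ d) + (1 - 2 * τ) * ((A *ᵥ d) ⬝ᵥ (A *ᵥ d)))
        - 1 / 2 * β ^ 2 * (τ * r * (dm ⬝ᵥ dm) + (1 - 2 * τ) * ((A *ᵥ dm) ⬝ᵥ (A *ᵥ dm)))
      ≤ β * (τ * r * β * (d ⬝ᵥ d) - β * ((A *ᵥ d) ⬝ᵥ (A *ᵥ d))) + p ⬝ᵥ p := by
  have hβ : 0 < β := hβm.trans_le hle1
  have hcross := abs_cross_term_le hA hτ d dm
  set X := τ * r * (d ⬝ᵥ dm) - (A *ᵥ d) ⬝ᵥ (A *ᵥ dm)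
  set R := 3 / 2 * τ * r * (d ⬝ᵥ d) + (τ - 7 / 4) * ((A *ᵥ d) ⬝ᵥ (A *ᵥ d))
    + 1 / 2 * τ * r * (dm ⬝ᵥ dm) + 1 / 2 * (1 - 2 * τ) * ((A *ᵥ dm) ⬝ᵥ (A *ᵥ dm))
  have hXR : βm * X ≤ β * R := calc
    βm * X ≤ βm * |X| := mul_le_mul_of_nonneg_left (le_abs_self X) hβm.le
    _ ≤ βm * R := mul_le_mul_of_nonneg_left hcross hβm.le
    _ ≤ β * R := mul_le_mul_of_nonneg_right hle1 ((abs_nonneg X).trans hcross)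
  simp only [X, R] at hXR hmono
  have hp : β * ((A *ᵥ d) ⬝ᵥ p) - β ^ 2 / 4 * ((A *ᵥ d) ⬝ᵥ (A *ᵥ d)) ≤ p ⬝ᵥ p := by
    have h := dotProduct_self_nonneg (p - (β / 2) • (A *ᵥ d))
    simp only [dotProduct_sub, sub_dotProduct, dotProduct_smul, smul_dotProduct, smul_eq_mul,
      dotProduct_comm p (A *ᵥ d)] at h
    linarith
  have hd := dotProduct_self_nonneg d
  have hAd := dotProduct_self_nonneg (A *ᵥ d)
  have hβsq : β ^ 2 ≤ βp ^ 2 := pow_le_pow_left₀ hβ.le hle2 2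
  linarith [mul_le_mul_of_nonneg_left hmono hβ.le, mul_le_mul_of_nonneg_left hXR hβ.le,
    mul_le_mul_of_nonneg_right (ge_iff_le.mp hgrow) hd, mul_nonneg (mul_nonneg hβ.le hσ) hd,
    mul_nonneg (mul_nonneg (sub_nonneg.mpr hβsq) (by linarith [hτ.1] : (0 : ℝ) ≤ 2 * τ - 1)) hAd]

end LinearizedStep

theorem stmt16_general {n₁ n₂ l : ℕ}
    (f₂ : (Fin n₂ → ℝ) → ℝ) (σ : ℝ) (hσ : 0 < σ)
    (A₁ : Matrix (Fin l) (Fin n₁) ℝ) (A₂ : Matrix (Fin l) (Fin n₂) ℝ) (b : Fin l → ℝ)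
    (τ r : ℝ) (hτ : τ ∈ Set.Icc (3 / 4 : ℝ) 1) (hr : maxEig (A₂ᵀ * A₂) < r)
    (βm β βp : ℝ) (hβm : 0 < βm) (hβ : 0 < β)
    (hle1 : βm ≤ β) (hle2 : β ≤ βp)
    (hgrow : β * (τ * r * β + σ) ≥ τ * r * βp ^ 2)
    (D Dm : Matrix (Fin n₂) (Fin n₂) ℝ)
    (hD : D = (τ * r * β) • 1 - β • (A₂ᵀ * A₂))
    (hDm : Dm = (τ * r * βm) • 1 - βm • (A₂ᵀ * A₂))
    (x1kk : Fin n₁ → ℝ) (x2km x2k x2kk x2' : Fin n₂ → ℝ)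
    (lamk lam : Fin l → ℝ)
    (lamkk lamt : Fin l → ℝ)
    (hlamkk : lamkk = lamk - β • (A₁.mulVec x1kk + A₂.mulVec x2kk - b))
    (hlamt : lamt = lamk - β • (A₁.mulVec x1kk + A₂.mulVec x2k - b))
    (hi : ∀ x₂ : Fin n₂ → ℝ,
      f₂ x₂ - f₂ x2kk + (x₂ - x2kk) ⬝ᵥ (-(A₂ᵀ.mulVec lamkk) + D.mulVec (x2kk - x2k))
        ≥ σ / 2 * ((x2kk - x₂) ⬝ᵥ (x2kk - x₂)))
    (hii : ∀ x₂ : Fin n₂ → ℝ,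
      f₂ x₂ - f₂ x2k + (x₂ - x2k) ⬝ᵥ (-(A₂ᵀ.mulVec lamk) + Dm.mulVec (x2k - x2km))
        ≥ σ / 2 * ((x2k - x₂) ⬝ᵥ (x2k - x₂)))
    (H : Matrix (Fin n₂ ⊕ Fin l) (Fin n₂ ⊕ Fin l) ℝ)
    (hH : H = Matrix.fromBlocks ((τ * r * β) • 1) 0 0 ((1 / β) • 1))
    (G : Matrix (Fin n₂ ⊕ Fin l) (Fin n₂ ⊕ Fin l) ℝ)
    (hG : G = Matrix.fromBlocks D 0 0 ((1 / β) • 1))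
    (H₀ : ℝ → Matrix (Fin n₂ ⊕ Fin l) (Fin n₂ ⊕ Fin l) ℝ)
    (hH₀ : ∀ s, H₀ s = Matrix.fromBlocks ((τ * r * s ^ 2) • 1) 0 0 1)
    (Θ : ℝ → (Fin n₂ → ℝ) → ℝ)
    (hΘ : ∀ s w, Θ s w =
      (1 / 2) * s ^ 2 * qf ((τ * r) • 1 + (1 - 2 * τ) • (A₂ᵀ * A₂)) w) :
    β * (qf H (Sum.elim x2kk lamkk - Sum.elim x2' lam)
        + σ * ((x2kk - x2') ⬝ᵥ (x2kk - x2'))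
        - qf H (Sum.elim x2k lamk - Sum.elim x2' lam)
        + qf G (Sum.elim x2k lamk - Sum.elim x2kk lamt))
      ≥ qf (H₀ βp) (Sum.elim x2kk lamkk - Sum.elim x2' lam)
        - qf (H₀ β) (Sum.elim x2k lamk - Sum.elim x2' lam)
        + Θ βp (x2k - x2kk) - Θ β (x2km - x2k) := by
  have hmono := strongly_monotone_of_first_order_ineq hi hii
  rw [hD, hDm, linearized_gradient_gap_eq A₂ (τ * r) β βm x2km x2k x2kk (p := lamk - lamt)
    (by rw [hlamkk, hlamt, mulVec_sub]; module)] at hmono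
  have hestimate := linearized_step_estimate (mulVec_dotProduct_self_le_of_maxEig_lt A₂ hr) hτ
    hσ.le hβm hle1 hle2 hgrow _ _ _ hmono
  have hu := mul_le_mul_of_nonneg_right (ge_iff_le.mp hgrow)
    (dotProduct_self_nonneg (x2kk - x2'))
  simp only [hH, hG, hH₀, hΘ, hD, ← Sum.elim_sub_sub, qf_fromBlocks_zero_sumElim, qf_smul_one,
    qf_one, qf_smul_one_sub_smul, qf_smul_one_add_smul]
  field_simp
  linarith

/-- Theorem 3.4: the linearized ADMM for (P2) with `f₂` `σ`-strongly convex and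
the possibly indefinite proximal matrix `D = τrβI - βA₂ᵀA₂`, `τ ∈ [3/4, 1]`,
`r > σ_max(A₂ᵀA₂)`, satisfies the additional convergence condition (CC3) with
`rᵏ = β`, `Θ(s, w) = ½s²‖w‖²_{τrI + (1-2τ)A₂ᵀA₂}` and
`H₀(s) = blockdiag(τrs²I, I)`. -/
theorem stmt16 {n₁ n₂ l : ℕ}
    (f₂ : (Fin n₂ → ℝ) → ℝ) (σ : ℝ) (hσ : 0 < σ)
    (A₁ : Matrix (Fin l) (Fin n₁) ℝ) (A₂ : Matrix (Fin l) (Fin n₂) ℝ) (b : Fin l → ℝ)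
    (τ r : ℝ) (hτ : τ ∈ Set.Icc (3 / 4 : ℝ) 1) (hr : maxEig (A₂ᵀ * A₂) < r)
    (βm β βp : ℝ) (hβm : 0 < βm) (hβ : 0 < β) (hβp : 0 < βp)
    (hle1 : βm ≤ β) (hle2 : β ≤ βp)
    (hgrow : β * (τ * r * β + σ) ≥ τ * r * βp ^ 2)
    (D Dm : Matrix (Fin n₂) (Fin n₂) ℝ)
    (hD : D = (τ * r * β) • 1 - β • (A₂ᵀ * A₂))
    (hDm : Dm = (τ * r * βm) • 1 - βm • (A₂ᵀ * A₂))
    (x1kk : Fin n₁ → ℝ) (x2km x2k x2kk x2' : Fin n₂ → ℝ)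
    (lamk lam : Fin l → ℝ)
    (lamkk lamt : Fin l → ℝ)
    (hlamkk : lamkk = lamk - β • (A₁.mulVec x1kk + A₂.mulVec x2kk - b))
    (hlamt : lamt = lamk - β • (A₁.mulVec x1kk + A₂.mulVec x2k - b))
    (hi : ∀ x₂ : Fin n₂ → ℝ,
      f₂ x₂ - f₂ x2kk + (x₂ - x2kk) ⬝ᵥ (-(A₂ᵀ.mulVec lamkk) + D.mulVec (x2kk - x2k))
        ≥ σ / 2 * ((x2kk - x₂) ⬝ᵥ (x2kk - x₂)))
    (hii : ∀ x₂ : Fin n₂ → ℝ,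
      f₂ x₂ - f₂ x2k + (x₂ - x2k) ⬝ᵥ (-(A₂ᵀ.mulVec lamk) + Dm.mulVec (x2k - x2km))
        ≥ σ / 2 * ((x2k - x₂) ⬝ᵥ (x2k - x₂)))
    (H : Matrix (Fin n₂ ⊕ Fin l) (Fin n₂ ⊕ Fin l) ℝ)
    (hH : H = Matrix.fromBlocks ((τ * r * β) • 1) 0 0 ((1 / β) • 1))
    (G : Matrix (Fin n₂ ⊕ Fin l) (Fin n₂ ⊕ Fin l) ℝ)
    (hG : G = Matrix.fromBlocks D 0 0 ((1 / β) • 1))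
    (H₀ : ℝ → Matrix (Fin n₂ ⊕ Fin l) (Fin n₂ ⊕ Fin l) ℝ)
    (hH₀ : ∀ s, H₀ s = Matrix.fromBlocks ((τ * r * s ^ 2) • 1) 0 0 1)
    (Θ : ℝ → (Fin n₂ → ℝ) → ℝ)
    (hΘ : ∀ s w, Θ s w =
      (1 / 2) * s ^ 2 * qf ((τ * r) • 1 + (1 - 2 * τ) • (A₂ᵀ * A₂)) w) :
    β * (qf H (Sum.elim x2kk lamkk - Sum.elim x2' lam)
        + σ * ((x2kk - x2') ⬝ᵥ (x2kk - x2'))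
        - qf H (Sum.elim x2k lamk - Sum.elim x2' lam)
        + qf G (Sum.elim x2k lamk - Sum.elim x2kk lamt))
      ≥ qf (H₀ βp) (Sum.elim x2kk lamkk - Sum.elim x2' lam)
        - qf (H₀ β) (Sum.elim x2k lamk - Sum.elim x2' lam)
        + Θ βp (x2k - x2kk) - Θ β (x2km - x2k) :=
  stmt16_general f₂ σ hσ A₁ A₂ b τ r hτ hr βm β βp hβm hβ hle1 hle2 hgrow D Dm hD hDm x1kk x2km x2k
    x2kk x2' lamk lam lamkk lamt hlamkk hlamt hi hii H hH G hG H₀ hH₀ Θ hΘ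
end
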